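/- Let β = (β₀,β₁,β₂,β₃) ∈ ℂ⁴. The polynomial λ² − t divides N_β(λ,t) in ℂ[λ,t] if and only if β₀ = β₁ and β₂ = β₃. -/

import Mathlib

/-!
Divisibility by `λ² - t` is tested on the parabola `t = λ²`: there `N_β` restricts to
`λ⁴ (λ - 1)³ ((β₀ - β₁)(λ - 1) + (β₂ - β₃)(λ + 1))`, which vanishes identically only if
`β₀ = β₁` (look at `λ = -1`) and then `β₂ = β₃` (look at `λ = 2`). Conversely `N_β` is
`λ² - t` times an explicit polynomial plus a remainder with coefficients `β₀ - β₁` and `β₂ - β₃`.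
-/

open MvPolynomial

/-- The polynomial `N_β(λ,t)` in `ℂ[λ,t]`, where `λ = X 0` and `t = X 1`. -/
noncomputable def Nbeta (β : Fin 4 → ℂ) : MvPolynomial (Fin 2) ℂ :=
  C (β 0) * (X 0) ^ 2 * (X 0 - 1) ^ 2 * (X 0 - X 1) ^ 2
    - C (β 1) * X 1 * (X 0 - 1) ^ 2 * (X 0 - X 1) ^ 2
    + C (β 2) * (X 1 - 1) * (X 0) ^ 2 * (X 0 - X 1) ^ 2
    - C (β 3) * X 1 * (X 1 - 1) * (X 0) ^ 2 * (X 0 - 1) ^ 2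

theorem eval_parabola_eq_zero_of_dvd {R : Type*} [CommRing R] {p : MvPolynomial (Fin 2) R}
    (h : (X 0 ^ 2 - X 1) ∣ p) (a : R) : eval ![a, a ^ 2] p = 0 := by
  obtain ⟨q, rfl⟩ := h
  simp

theorem eval_parabola_Nbeta (β : Fin 4 → ℂ) (a : ℂ) :
    eval ![a, a ^ 2] (Nbeta β) =
      a ^ 4 * (a - 1) ^ 3 * ((β 0 - β 1) * (a - 1) + (β 2 - β 3) * (a + 1)) := by
  simp [Nbeta]
  ring

theorem Nbeta_eq_mul_add (β : Fin 4 → ℂ) :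
    Nbeta β = (X 0 ^ 2 - X 1) *
        (C (β 0) * (X 0 - 1) ^ 2 * (X 0 - X 1) ^ 2 - C (β 2) * (X 1 - 1) ^ 2 * X 0 ^ 2)
      + C (β 0 - β 1) * X 1 * (X 0 - 1) ^ 2 * (X 0 - X 1) ^ 2
      + C (β 2 - β 3) * X 1 * (X 1 - 1) * X 0 ^ 2 * (X 0 - 1) ^ 2 := by
  simp only [Nbeta, map_sub]
  ring

theorem stmt16 (β : Fin 4 → ℂ) :
    ((X 0) ^ 2 - X 1) ∣ Nbeta β ↔ β 0 = β 1 ∧ β 2 = β 3 := by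
  constructor
  · intro h
    have h₁ := eval_parabola_Nbeta β (-1)
    have h₂ := eval_parabola_Nbeta β 2
    rw [eval_parabola_eq_zero_of_dvd h] at h₁ h₂
    have hβ₀₁ : β 0 = β 1 := by linear_combination -h₁ / 16
    exact ⟨hβ₀₁, by linear_combination -h₂ / 48 - hβ₀₁ / 3⟩
  · rintro ⟨h₀₁, h₂₃⟩
    rw [Nbeta_eq_mul_add, h₀₁, h₂₃, sub_self, map_zero]
    simp
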